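/- For every natural number k ≥ 1, A_k = ∑_{j=0}^{k-1} C(k,j)·B_j. -/

import Mathlib

/-!
In terms of exponential generating functions `a = ∑ Aₙ xⁿ/n!` and `b = ∑ Bₙ xⁿ/n!`, the
recurrences say `a = e⁻ˣ + (eˣ - e⁻ˣ) a` and `b = 1 + (eˣ - e⁻ˣ) b`. Multiplying by the
nonzero series `1 - (eˣ - e⁻ˣ)` shows `a = eˣ b - b + 1`, and for `k ≥ 1` the `k`-th
coefficient of the right-hand side is `(∑_{j<k} C(k,j) B_j) / k!`.
-/

/-- The sequence `A` with `A_0 = 1` and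
`A_p = (-1)^p + 2·∑_{j=0}^{⌊p/2⌋} C(p,2j+1)·A_{p-2j-1}` for `p > 0`. -/
def A : ℕ → ℤ
  | 0 => 1
  | p + 1 => (-1) ^ (p + 1) + 2 * ∑ j ∈ Finset.range ((p + 1) / 2 + 1),
      (((p + 1).choose (2 * j + 1) : ℤ)) * A (p - 2 * j)
  decreasing_by exact Nat.lt_succ_of_le (Nat.sub_le p (2 * j))

/-- The sequence `B` with `B_0 = 1` and
`B_p = 2·∑_{j=0}^{⌊p/2⌋} C(p,2j+1)·B_{p-2j-1}` for `p > 0`. -/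
def B : ℕ → ℤ
  | 0 => 1
  | p + 1 => 2 * ∑ j ∈ Finset.range ((p + 1) / 2 + 1),
      (((p + 1).choose (2 * j + 1) : ℤ)) * B (p - 2 * j)
  decreasing_by exact Nat.lt_succ_of_le (Nat.sub_le p (2 * j))

open Finset PowerSeries
open scoped Nat

theorem Finset.sum_range_two_mul {M : Type*} [AddCommMonoid M] (f : ℕ → M) (m : ℕ) :
    ∑ i ∈ range (2 * m), f i = ∑ j ∈ range m, (f (2 * j) + f (2 * j + 1)) := by
  induction m with
  | zero => simp
  | succ m ih =>
    rw [mul_add, mul_one, sum_range_succ, sum_range_succ, sum_range_succ, ih, add_assoc]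

theorem sum_range_choose_mul_one_sub_neg_one_pow {R : Type*} [CommRing R] (g : ℕ → R)
    {n m : ℕ} (hnm : n + 1 ≤ 2 * m) :
    ∑ i ∈ range (n + 1), (n.choose i : R) * (1 - (-1) ^ i) * g i
      = 2 * ∑ j ∈ range m, (n.choose (2 * j + 1) : R) * g (2 * j + 1) := by
  have hvanish : ∀ i ∈ range (2 * m), i ∉ range (n + 1) →
      (n.choose i : R) * (1 - (-1) ^ i) * g i = 0 := fun i _ hi => by
    rw [Nat.choose_eq_zero_of_lt (by simpa using hi), Nat.cast_zero, zero_mul, zero_mul]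
  rw [sum_subset (range_subset_range.mpr hnm) hvanish, sum_range_two_mul, mul_sum]
  refine sum_congr rfl fun j _ => ?_
  simp only [pow_succ, pow_mul]
  ring

theorem A_eq_add_sum (n : ℕ) :
    A n = (-1) ^ n + ∑ i ∈ range (n + 1), (n.choose i : ℤ) * (1 - (-1) ^ i) * A (n - i) := by
  cases n with
  | zero => simp [A]
  | succ p =>
    rw [sum_range_choose_mul_one_sub_neg_one_pow (m := (p + 1) / 2 + 1) (fun i => A (p + 1 - i))
      (by omega), A]
    simp

theorem B_eq_add_sum (n : ℕ) :
    B n = (if n = 0 then 1 else 0)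
      + ∑ i ∈ range (n + 1), (n.choose i : ℤ) * (1 - (-1) ^ i) * B (n - i) := by
  cases n with
  | zero => simp [B]
  | succ p =>
    rw [sum_range_choose_mul_one_sub_neg_one_pow (m := (p + 1) / 2 + 1) (fun i => B (p + 1 - i))
      (by omega), B]
    simp

section ExponentialGeneratingFunction

variable {K : Type*} [Field K]

def egf (u : ℕ → K) : K⟦X⟧ := mk fun n => u n / n !

@[simp]
theorem coeff_egf (u : ℕ → K) (n : ℕ) : coeff n (egf u) = u n / n ! := coeff_mk _ _

theorem egf_sub (u v : ℕ → K) : egf (u - v) = egf u - egf v := by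
  ext n; simp [sub_div]

variable [CharZero K]

theorem coeff_egf_mul (u v : ℕ → K) (n : ℕ) :
    coeff n (egf u * egf v)
      = (∑ i ∈ range (n + 1), (n.choose i : K) * u i * v (n - i)) / n ! := by
  rw [coeff_mul, sum_div,
    Nat.sum_antidiagonal_eq_sum_range_succ fun i j => coeff i (egf u) * coeff j (egf v)]
  refine sum_congr rfl fun i hi => ?_
  obtain ⟨j, rfl⟩ := Nat.exists_eq_add_of_le (mem_range_succ_iff.mp hi)
  rw [coeff_egf, coeff_egf, Nat.add_sub_cancel_left, Nat.cast_add_choose]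
  field_simp [Nat.factorial_ne_zero]

theorem egf_mul_one_sub_egf_of_eq_add_sum {u c s : ℕ → K}
    (h : ∀ n, u n = c n + ∑ i ∈ range (n + 1), (n.choose i : K) * s i * u (n - i)) :
    egf u * (1 - egf s) = egf c := by
  ext n
  rw [mul_sub, mul_one, map_sub, mul_comm, coeff_egf_mul, coeff_egf, coeff_egf, h n, ← sub_div]
  ring

end ExponentialGeneratingFunction

theorem egf_A_eq (K : Type*) [Field K] [CharZero K] :
    egf (fun n => (A n : K)) = egf (fun n => (B n : K)) * egf 1 - egf (fun n => (B n : K)) + 1 := by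
  have hA : egf (fun n => (A n : K)) * (1 - egf fun i => 1 - (-1) ^ i) = egf fun n => (-1) ^ n :=
    egf_mul_one_sub_egf_of_eq_add_sum fun n => by rw [A_eq_add_sum n]; push_cast; rfl
  have hB : egf (fun n => (B n : K)) * (1 - egf fun i => 1 - (-1) ^ i) = 1 := by
    have hone : egf (fun n => if n = 0 then (1 : K) else 0) = 1 := by
      ext (_ | n) <;> simp [coeff_one]
    exact (egf_mul_one_sub_egf_of_eq_add_sum fun n => by
      rw [B_eq_add_sum n]; push_cast; rfl).trans hone
  have hs : (egf fun i => (1 : K) - (-1) ^ i) = egf 1 - egf fun n => (-1) ^ n := egf_sub _ _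
  have hne : (1 - egf fun i => (1 : K) - (-1) ^ i) ≠ 0 := fun h => by
    have h0 := congr_arg (coeff 0) h
    rw [map_sub, coeff_one, coeff_egf] at h0
    simp at h0
  refine mul_right_cancel₀ hne ?_
  rw [hA]
  linear_combination (1 - egf 1) * hB + hs

/-- For every `k ≥ 1`, `A_k = ∑_{j=0}^{k-1} C(k,j)·B_j`. -/
theorem A_eq_sum_choose_B (k : ℕ) (hk : 1 ≤ k) :
    A k = ∑ j ∈ Finset.range k, (k.choose j : ℤ) * B j := by
  have h := congr_arg (coeff k) (egf_A_eq ℚ)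
  rw [map_add, map_sub, coeff_egf_mul, coeff_egf, coeff_egf, coeff_one, if_neg (by omega),
    sum_range_succ, Nat.sub_self, Nat.choose_self] at h
  simp only [Pi.one_apply, mul_one, Nat.cast_one, one_mul, add_zero, ← sub_div,
    add_sub_cancel_right] at h
  exact_mod_cast (div_left_inj' (by positivity)).mp h
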